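/- arXiv:2502.07765 — 2 statements merged into one kernel-verified Lean document; each statement's English description precedes it below -/
import Mathlib

section
/- Let B_{1,ℝ} and B_{2,ℝ} be two real Banach spaces carrying cones 𝒞_{1,ℝ}, 𝒞_{2,ℝ} from the real/complex cone setup, with the constant κ for the second space. Let A : B_{1,ℝ} → B_{2,ℝ} be a bounded linear operator with A(𝒞_{1,ℝ}) ⊂ 𝒞_{2,ℝ} whose image has finite diameter Δ_ℝ in the Hilbert projective metric d_H of 𝒞_{2,ℝ}. Then the complex-linear extension of A to the complexifications maps 𝒞_{1,ℂ} into 𝒞_{2,ℂ}, and the δ_{𝒞_{2,ℂ}}-diameter of A(𝒞_{1,ℂ}) satisfies Δ_ℂ ≤ 8Δ_ℝ + 2 ln(3√2 κ^{−2}). -/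
/-!
Let `ℓ` be a complex functional that does not vanish on `𝒞_ℝ + i𝒞_ℝ`. Any two values `ℓ(c, 0)`,
`c ∈ 𝒞_ℝ`, make an angle of at most `π/2`: otherwise a positive combination of the two cone
vectors would produce a zero of `ℓ`. Applied to `z - α w` and `β w - z`, this puts
`ℓ(z, 0) / ℓ(w, 0)` in the disk with diameter `[α, β]` whenever `α w ≤ z ≤ β w`. On the image of
the cone, where `β ≤ e^Δ α`, the quantity `|ℓ(x + iy)| / (𝕞 x + 𝕞 y)` is therefore determined up
to a factor `3 e^{3Δ}` independently of `x + iy`. Comparing two functionals bounds `δ` by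
`6Δ + 2 ln 3`, and the scalar `z ∈ ℂ_*` in `𝒞_ℂ = ℂ_* (𝒞_ℝ + i𝒞_ℝ)` cancels out of `δ`.
-/

open Complex Set ENNReal

namespace ConeSetup

variable {B : Type*} [NormedAddCommGroup B] [NormedSpace ℝ B]

/-- Complex scalar multiplication on the complexification `B × B`:
`(a+ib)(x,y) = (ax − by, ay + bx)`. -/
def cSmul (z : ℂ) (p : B × B) : B × B :=
  (z.re • p.1 - z.im • p.2, z.re • p.2 + z.im • p.1)

/-- The "real" norm `‖(x,y)‖_r = √(‖x‖² + ‖y‖²)` on the complexification. -/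
noncomputable def rNorm (p : B × B) : ℝ :=
  Real.sqrt (‖p.1‖ ^ 2 + ‖p.2‖ ^ 2)

/-- The complexification norm `‖(x,y)‖ = sup_{θ∈[0,2π]} ‖e^{iθ}(x,y)‖_r`. -/
noncomputable def cNorm (p : B × B) : ℝ :=
  sSup ((fun θ : ℝ => rNorm (cSmul (Complex.exp (θ * Complex.I)) p)) ''
    Set.Icc 0 (2 * Real.pi))

/-- The real cone `𝒞_ℝ = {h ≠ 0 : ℓ(h) ≥ 0 for all ℓ ∈ S}`. -/
def realCone (S : Set (B →L[ℝ] ℝ)) : Set B :=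
  {h | h ≠ 0 ∧ ∀ ℓ ∈ S, 0 ≤ ℓ h}

/-- The complex cone `𝒞_ℂ = ℂ_* ⋅ (𝒞_ℝ + i 𝒞_ℝ)`. -/
def complexCone (S : Set (B →L[ℝ] ℝ)) : Set (B × B) :=
  {p | ∃ z : ℂ, z ≠ 0 ∧ ∃ x ∈ realCone S, ∃ y ∈ realCone S, p = cSmul z (x, y)}

/-- A map `B × B → ℂ` is a (continuous) complex-linear functional for the complex
structure `cSmul`. -/
def IsCLinearFunctional (ℓ : B × B → ℂ) : Prop :=
  (∀ p q : B × B, ℓ (p + q) = ℓ p + ℓ q) ∧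
  (∀ (z : ℂ) (p : B × B), ℓ (cSmul z p) = z * ℓ p) ∧
  Continuous ℓ

/-- The dual real cone `𝒞'_ℝ = {ℓ ∈ B'_ℝ : ℓ(h) ≥ 0 for all h ∈ 𝒞_ℝ}`. -/
def dualRealCone (S : Set (B →L[ℝ] ℝ)) : Set (B →L[ℝ] ℝ) :=
  {ℓ | ∀ h ∈ realCone S, 0 ≤ ℓ h}

/-- The dual complex cone `𝒞'_ℂ = {ℓ ∈ B'_ℂ : ℓ(h) ≠ 0 for all h ∈ 𝒞_ℂ}`. -/
def dualComplexCone (S : Set (B →L[ℝ] ℝ)) : Set (B × B → ℂ) :=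
  {ℓ | IsCLinearFunctional ℓ ∧ ∀ h ∈ complexCone S, ℓ h ≠ 0}

/-- The action of a real functional on the complexification: `ℓ(x+iy) = ℓ(x) + iℓ(y)`. -/
noncomputable def cext (ℓ : B →L[ℝ] ℝ) (p : B × B) : ℂ :=
  (ℓ p.1 : ℂ) + (ℓ p.2 : ℂ) * Complex.I

/-- `𝒞̊'_ℝ = {ℓ ∈ 𝒞'_ℝ : ℓ(x) > 0 for all x ∈ 𝒞_ℝ}`. -/
def interiorDualRealCone (S : Set (B →L[ℝ] ℝ)) : Set (B →L[ℝ] ℝ) :=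
  {ℓ | ℓ ∈ dualRealCone S ∧ ∀ x ∈ realCone S, 0 < ℓ x}

/-- `Ĉ'_ℂ = {±ℓ ± ip : ℓ, p ∈ 𝒞̊'_ℝ}`. -/
def hatDualComplexCone (S : Set (B →L[ℝ] ℝ)) : Set (B × B → ℂ) :=
  {q | ∃ ℓ ∈ interiorDualRealCone S, ∃ p ∈ interiorDualRealCone S,
    ∃ ε₁ ∈ ({1, -1} : Set ℝ), ∃ ε₂ ∈ ({1, -1} : Set ℝ),
      q = fun v => (ε₁ : ℂ) * cext ℓ v + (ε₂ : ℂ) * Complex.I * cext p v}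

/-- `E_𝒞(h,g) = {ℓ(h)/ℓ(g) : ℓ ∈ 𝒞'_ℂ}`. -/
def gaugeSet (S : Set (B →L[ℝ] ℝ)) (h g : B × B) : Set ℂ :=
  {z | ∃ ℓ ∈ dualComplexCone S, z = ℓ h / ℓ g}

/-- The projective gauge
`δ_𝒞(h,g) = ln( sup_{z∈E_𝒞(h,g)} |z| / inf_{z∈E_𝒞(h,g)} |z| ) = sup_{z,w∈E_𝒞(h,g)} ln|z/w|`,
valued in `[0,∞]`. -/
noncomputable def deltaGauge (S : Set (B →L[ℝ] ℝ)) (h g : B × B) : ℝ≥0∞ :=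
  ⨆ z ∈ gaugeSet S h g, ⨆ w ∈ gaugeSet S h g, ENNReal.ofReal (Real.log (‖z‖ / ‖w‖))

/-- The real/complex cone setup: a separating family `S` of functionals, an order unit `𝕖`
whose cone norm is the norm of `B`, and a functional `𝕞` in the weak-* closed convex hull
of `ℝ₊ ⋅ S` dominating the norm on the cone. -/
structure Setup (B : Type*) [NormedAddCommGroup B] [NormedSpace ℝ B] where
  S : Set (B →L[ℝ] ℝ)
  e : B
  mm : B →L[ℝ] ℝ
  κ : ℝ
  separating : ∀ x : B, (∀ ℓ ∈ S, ℓ x = 0) → x = 0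
  e_mem : e ∈ realCone S
  arch : ∀ h : B, ∃ l : ℝ, 0 ≤ l ∧ ∀ ℓ ∈ S, 0 ≤ ℓ (l • e - h)
  norm_eq : ∀ h : B,
    ‖h‖ = sInf {l : ℝ | 0 ≤ l ∧ ∀ ℓ ∈ S, 0 ≤ ℓ (l • e - h) ∧ 0 ≤ ℓ (l • e + h)}
  κ_pos : 0 < κ
  κ_lt_one : κ < 1
  mm_e : mm e = 1
  mm_lower : ∀ h ∈ realCone S, κ * ‖h‖ ≤ mm h
  mm_star : (⇑mm : B → ℝ) ∈ closure ((fun ℓ : B →L[ℝ] ℝ => (⇑ℓ : B → ℝ)) ''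
    convexHull ℝ {q : B →L[ℝ] ℝ | ∃ c : ℝ, 0 ≤ c ∧ ∃ ℓ ∈ S, q = c • ℓ})


open ComplexConjugate Metric

/-- `d_H(h, g) ≤ Δ`, witnessed by `α h ≤ g ≤ β h` with `β ≤ e^Δ α`. -/
def HilbertDistLE (S : Set (B →L[ℝ] ℝ)) (Δ : ℝ) (h g : B) : Prop :=
  ∃ α β : ℝ, 0 < α ∧ α ≤ β ∧ β ≤ α * Real.exp Δ ∧
    (g - α • h ∈ realCone S ∨ g - α • h = 0) ∧ (β • h - g ∈ realCone S ∨ β • h - g = 0)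

theorem HilbertDistLE.nonneg {S : Set (B →L[ℝ] ℝ)} {Δ : ℝ} {h g : B}
    (hd : HilbertDistLE S Δ h g) : 0 ≤ Δ := by
  obtain ⟨α, β, hα, hαβ, hβ, -⟩ := hd
  rw [← Real.one_le_exp_iff]
  nlinarith

section Cones

variable {S : Set (B →L[ℝ] ℝ)}

theorem smul_mem_realCone {c : B} (hc : c ∈ realCone S) {a : ℝ} (ha : 0 < a) :
    a • c ∈ realCone S :=
  ⟨smul_ne_zero ha.ne' hc.1, fun f hf => by
    simpa only [map_smul, smul_eq_mul] using mul_nonneg ha.le (hc.2 f hf)⟩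

theorem add_mem_realCone (hsep : ∀ x : B, (∀ f ∈ S, f x = 0) → x = 0) {c c' : B}
    (hc : c ∈ realCone S) (hc' : c' ∈ realCone S) : c + c' ∈ realCone S := by
  refine ⟨fun h0 => hc.1 (hsep c fun f hf => ?_), fun f hf => ?_⟩
  · have := congrArg f h0
    rw [map_add, map_zero] at this
    linarith [hc.2 f hf, hc'.2 f hf]
  · rw [map_add]
    exact add_nonneg (hc.2 f hf) (hc'.2 f hf)

theorem pair_mem_complexCone {x y : B} (hx : x ∈ realCone S) (hy : y ∈ realCone S) :
    (x, y) ∈ complexCone S :=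
  ⟨1, one_ne_zero, x, hx, y, hy, by simp [cSmul]⟩

theorem mul_apply_le_apply_of_sub {m : B →L[ℝ] ℝ} (hm : ∀ c ∈ realCone S, 0 < m c)
    {z w : B} {α : ℝ} (hd : z - α • w ∈ realCone S ∨ z - α • w = 0) : α * m w ≤ m z := by
  have : 0 ≤ m (z - α • w) := hd.elim (fun h => (hm _ h).le) (fun h => by rw [h, map_zero])
  rw [map_sub, map_smul, smul_eq_mul] at this
  linarith

theorem HilbertDistLE.apply_pos {m : B →L[ℝ] ℝ} (hm : ∀ c ∈ realCone S, 0 < m c) {Δ : ℝ}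
    {w z : B} (hw : w ∈ realCone S) (hd : HilbertDistLE S Δ w z) : 0 < m z := by
  obtain ⟨α, -, hα, -, -, hz, -⟩ := hd
  exact (mul_pos hα (hm w hw)).trans_le (mul_apply_le_apply_of_sub hm hz)

end Cones

theorem Setup.mm_pos (st : Setup B) : ∀ c ∈ realCone st.S, 0 < st.mm c := fun c hc =>
  (mul_pos st.κ_pos (norm_pos_iff.mpr hc.1)).trans_le (st.mm_lower c hc)

section Disk

variable {α β : ℝ} {ζ : ℂ}

/-- Thales: `|ζ - (α + β) / 2|² = ((β - α) / 2)² - Re (conj (ζ - α) (β - ζ))`. -/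
theorem mem_closedBall_of_re_conj_mul_nonneg (hαβ : α ≤ β)
    (h : 0 ≤ (conj (ζ - α) * (β - ζ)).re) :
    ζ ∈ closedBall (((α + β) / 2 : ℝ) : ℂ) ((β - α) / 2) := by
  rw [mem_closedBall, dist_eq_norm, ← sq_le_sq₀ (norm_nonneg _) (by linarith),
    Complex.sq_norm, Complex.normSq_apply]
  simp only [Complex.mul_re, Complex.conj_re, Complex.conj_im, Complex.sub_re,
    Complex.sub_im, Complex.ofReal_re, Complex.ofReal_im] at h ⊢
  nlinarith

theorem norm_le_of_mem_closedBall_midpoint (hα : 0 ≤ α)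
    (hζ : ζ ∈ closedBall (((α + β) / 2 : ℝ) : ℂ) ((β - α) / 2)) : ‖ζ‖ ≤ β := by
  have hαβ : α ≤ β := by linarith [dist_nonneg.trans (mem_closedBall.mp hζ)]
  have := norm_le_of_mem_closedBall hζ
  rw [Complex.norm_real, Real.norm_of_nonneg (by linarith)] at this
  linarith

theorem one_add_le_of_mem_closedBall_midpoint {D : ℝ} (hα : 0 < α) (hβ : β ≤ α * D)
    (hζ : ζ ∈ closedBall (((α + β) / 2 : ℝ) : ℂ) ((β - α) / 2)) :
    1 + α ≤ 3 * D * ‖ζ + I‖ := by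
  rw [mem_closedBall, dist_eq_norm] at hζ
  have hre := (abs_le.mp ((Complex.abs_re_le_norm _).trans hζ)).1
  have him := (abs_le.mp ((Complex.abs_im_le_norm _).trans hζ)).1
  have hre' := (le_abs_self _).trans (Complex.abs_re_le_norm (ζ + I))
  have him' := (le_abs_self _).trans (Complex.abs_im_le_norm (ζ + I))
  simp only [Complex.sub_re, Complex.sub_im, Complex.add_re, Complex.add_im, Complex.ofReal_re,
    Complex.ofReal_im, Complex.I_re, Complex.I_im] at hre him hre' him'
  have hD : 1 ≤ D := by nlinarith [norm_nonneg (ζ - (((α + β) / 2 : ℝ) : ℂ))]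
  rcases le_or_gt ((D - 1) * α) 1 with h | h
  · rcases le_or_gt (1 / 2) α with h' | h' <;> nlinarith
  · nlinarith

end Disk

section RealLinearMap

variable {S : Set (B →L[ℝ] ℝ)} {L : B →ₗ[ℝ] ℂ}

theorem apply_ne_zero_of_mem_realCone
    (hL : ∀ x ∈ realCone S, ∀ y ∈ realCone S, L x + I * L y ≠ 0)
    {c : B} (hc : c ∈ realCone S) : L c ≠ 0 := by
  intro h0
  exact hL c hc c hc (by rw [h0, mul_zero, add_zero])

theorem re_conj_mul_nonneg (hsep : ∀ x : B, (∀ f ∈ S, f x = 0) → x = 0)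
    (hL : ∀ x ∈ realCone S, ∀ y ∈ realCone S, L x + I * L y ≠ 0) {c c' : B}
    (hc : c ∈ realCone S ∨ c = 0) (hc' : c' ∈ realCone S ∨ c' = 0) :
    0 ≤ (conj (L c) * L c').re := by
  obtain hc | rfl := hc
  case inr => simp
  obtain hc' | rfl := hc'
  case inr => simp
  set a := L c
  have ha : a ≠ 0 := apply_ne_zero_of_mem_realCone hL hc
  set ρ := L c' / a
  have hc'a : L c' = ρ * a := (div_mul_cancel₀ _ ha).symm
  have hre : (conj a * L c').re = Complex.normSq a * ρ.re := by
    rw [hc'a, mul_comm ρ, ← mul_assoc, ← Complex.normSq_eq_conj_mul_self, Complex.re_ofReal_mul]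
  rw [hre]
  refine mul_nonneg (Complex.normSq_nonneg a) (not_lt.mp fun hρ => ?_)
  -- as `L v = i (Im ρ) a`, pairing `v` with `± (Im ρ) c`, or with itself, gives a zero of `hL`
  have hv : (-ρ.re) • c + c' ∈ realCone S :=
    add_mem_realCone hsep (smul_mem_realCone hc (neg_pos.mpr hρ)) hc'
  have hLv : L ((-ρ.re) • c + c') = ρ.im * I * a := by
    rw [map_add, map_smul, hc'a, Complex.real_smul]
    push_cast
    linear_combination (-a) * Complex.re_add_im ρ
  rcases lt_trichotomy ρ.im 0 with him | him | him
  · refine hL _ hv _ (smul_mem_realCone hc (neg_pos.mpr him)) ?_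
    rw [hLv, map_smul, Complex.real_smul]
    push_cast
    ring
  · exact hL _ hv _ hv (by rw [hLv, him]; simp)
  · refine hL _ (smul_mem_realCone hc him) _ hv ?_
    rw [hLv, map_smul, Complex.real_smul]
    linear_combination (ρ.im : ℂ) * a * Complex.I_mul_I

theorem div_mem_closedBall (hsep : ∀ x : B, (∀ f ∈ S, f x = 0) → x = 0)
    (hL : ∀ x ∈ realCone S, ∀ y ∈ realCone S, L x + I * L y ≠ 0) {z w : B}
    (hw : w ∈ realCone S) {α β : ℝ} (hαβ : α ≤ β)
    (hz : z - α • w ∈ realCone S ∨ z - α • w = 0)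
    (hz' : β • w - z ∈ realCone S ∨ β • w - z = 0) :
    L z / L w ∈ closedBall (((α + β) / 2 : ℝ) : ℂ) ((β - α) / 2) := by
  set a := L w
  set ζ := L z / a
  have hza : L z = ζ * a := (div_mul_cancel₀ _ (apply_ne_zero_of_mem_realCone hL hw)).symm
  refine mem_closedBall_of_re_conj_mul_nonneg hαβ ?_
  have h := re_conj_mul_nonneg hsep hL hz hz'
  have h₁ : L (z - α • w) = (ζ - α) * a := by
    rw [map_sub, map_smul, Complex.real_smul, hza]; ring
  have h₂ : L (β • w - z) = (β - ζ) * a := by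
    rw [map_sub, map_smul, Complex.real_smul, hza]; ring
  rw [h₁, h₂, map_mul, mul_mul_mul_comm, ← Complex.normSq_eq_conj_mul_self,
    Complex.re_mul_ofReal] at h
  exact nonneg_of_mul_nonneg_left h
    (Complex.normSq_pos.mpr (apply_ne_zero_of_mem_realCone hL hw))

theorem norm_apply_mul_le_of_hilbertDistLE (hsep : ∀ x : B, (∀ f ∈ S, f x = 0) → x = 0)
    (hL : ∀ x ∈ realCone S, ∀ y ∈ realCone S, L x + I * L y ≠ 0)
    {m : B →L[ℝ] ℝ} (hm : ∀ c ∈ realCone S, 0 < m c) {Δ : ℝ} {z w : B}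
    (hw : w ∈ realCone S) (hd : HilbertDistLE S Δ w z) :
    ‖L z‖ * m w ≤ Real.exp Δ * m z * ‖L w‖ := by
  obtain ⟨α, β, hα, hαβ, hβ, hz, hz'⟩ := hd
  have hζ :=
    norm_le_of_mem_closedBall_midpoint hα.le (div_mem_closedBall hsep hL hw hαβ hz hz')
  rw [norm_div, div_le_iff₀ (norm_pos_iff.mpr (apply_ne_zero_of_mem_realCone hL hw))] at hζ
  have hmz := mul_apply_le_apply_of_sub hm hz
  have hmw := (hm w hw).le
  calc ‖L z‖ * m w ≤ α * Real.exp Δ * ‖L w‖ * m w := by gcongr; exact hζ.trans (by gcongr)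
    _ = Real.exp Δ * ‖L w‖ * (α * m w) := by ring
    _ ≤ Real.exp Δ * ‖L w‖ * m z := by gcongr
    _ = Real.exp Δ * m z * ‖L w‖ := by ring

theorem norm_apply_mul_add_le_of_hilbertDistLE (hsep : ∀ x : B, (∀ f ∈ S, f x = 0) → x = 0)
    (hL : ∀ x ∈ realCone S, ∀ y ∈ realCone S, L x + I * L y ≠ 0)
    {m : B →L[ℝ] ℝ} (hm : ∀ c ∈ realCone S, 0 < m c) {Δ : ℝ} {x y : B}
    (hy : y ∈ realCone S) (hd : HilbertDistLE S Δ y x) :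
    ‖L x‖ * (m x + m y) ≤ 3 * Real.exp Δ ^ 2 * m x * ‖L x + I * L y‖ := by
  have hmx₀ := (hd.apply_pos hm hy).le
  obtain ⟨α, β, hα, hαβ, hβ, hx, hx'⟩ := hd
  set D := Real.exp Δ
  set a := L y
  have ha : 0 < ‖a‖ := norm_pos_iff.mpr (apply_ne_zero_of_mem_realCone hL hy)
  have hdisk := div_mem_closedBall hsep hL hy hαβ hx hx'
  have hζ := norm_le_of_mem_closedBall_midpoint hα.le hdisk
  have hζI := one_add_le_of_mem_closedBall_midpoint hα hβ hdisk
  rw [norm_div, div_le_iff₀ ha] at hζ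
  have hLxy : ‖L x + I * a‖ = ‖L x / a + I‖ * ‖a‖ := by
    rw [← norm_mul, add_mul, div_mul_cancel₀ _ (norm_pos_iff.mp ha), mul_comm]
  have hmx := mul_apply_le_apply_of_sub hm hx
  refine le_of_mul_le_mul_left ?_ hα
  calc α * (‖L x‖ * (m x + m y)) ≤ ‖L x‖ * m x * (1 + α) := by nlinarith [norm_nonneg (L x)]
    _ ≤ α * D * ‖a‖ * m x * (3 * D * ‖L x / a + I‖) := by
      gcongr
      exact hζ.trans (by gcongr)
    _ = α * (3 * D ^ 2 * m x * ‖L x + I * a‖) := by rw [hLxy]; ring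

theorem norm_add_I_mul_mul_le (hsep : ∀ x : B, (∀ f ∈ S, f x = 0) → x = 0)
    (hL : ∀ x ∈ realCone S, ∀ y ∈ realCone S, L x + I * L y ≠ 0)
    {m : B →L[ℝ] ℝ} (hm : ∀ c ∈ realCone S, 0 < m c) {Δ : ℝ} {x y x' y' : B}
    (hx' : x' ∈ realCone S) (hy' : y' ∈ realCone S) (hx : HilbertDistLE S Δ x' x)
    (hy : HilbertDistLE S Δ x' y) (hxy' : HilbertDistLE S Δ y' x') :
    ‖L x + I * L y‖ * (m x' + m y') ≤
      3 * Real.exp Δ ^ 3 * (m x + m y) * ‖L x' + I * L y'‖ := by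
  set D := Real.exp Δ
  have hu : ‖L x + I * L y‖ * m x' ≤ D * (m x + m y) * ‖L x'‖ := by
    have htri : ‖L x + I * L y‖ ≤ ‖L x‖ + ‖L y‖ := by
      simpa only [norm_mul, Complex.norm_I, one_mul] using norm_add_le (L x) (I * L y)
    have hx₁ := norm_apply_mul_le_of_hilbertDistLE hsep hL hm hx' hx
    have hy₁ := norm_apply_mul_le_of_hilbertDistLE hsep hL hm hx' hy
    nlinarith [(hm x' hx').le]
  have hv := norm_apply_mul_add_le_of_hilbertDistLE hsep hL hm hy' hxy'
  have hM' : 0 ≤ m x' + m y' := add_nonneg (hm x' hx').le (hm y' hy').le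
  have hM := add_pos (hx.apply_pos hm hx') (hy.apply_pos hm hx')
  refine le_of_mul_le_mul_left ?_ (hm x' hx')
  calc m x' * (‖L x + I * L y‖ * (m x' + m y'))
      = ‖L x + I * L y‖ * m x' * (m x' + m y') := by ring
    _ ≤ D * (m x + m y) * ‖L x'‖ * (m x' + m y') := by gcongr
    _ ≤ D * (m x + m y) * (3 * D ^ 2 * m x' * ‖L x' + I * L y'‖) := by
      rw [mul_assoc _ ‖L x'‖]
      gcongr
    _ = m x' * (3 * D ^ 3 * (m x + m y) * ‖L x' + I * L y'‖) := by ring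

end RealLinearMap

def IsCLinearFunctional.realRestrict {ℓ : B × B → ℂ} (hℓ : IsCLinearFunctional ℓ) :
    B →ₗ[ℝ] ℂ where
  toFun x := ℓ (x, 0)
  map_add' x y := by simpa using hℓ.1 (x, 0) (y, 0)
  map_smul' r x := by simpa [cSmul] using hℓ.2.1 r (x, 0)

theorem IsCLinearFunctional.apply_eq {ℓ : B × B → ℂ} (hℓ : IsCLinearFunctional ℓ) (x y : B) :
    ℓ (x, y) = hℓ.realRestrict x + I * hℓ.realRestrict y := by
  have : ((x, y) : B × B) = (x, 0) + cSmul I (y, 0) := by simp [cSmul]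
  rw [this, hℓ.1, hℓ.2.1]
  rfl

theorem norm_apply_mul_le_of_mem_dualComplexCone {S : Set (B →L[ℝ] ℝ)}
    (hsep : ∀ x : B, (∀ f ∈ S, f x = 0) → x = 0) {m : B →L[ℝ] ℝ}
    (hm : ∀ c ∈ realCone S, 0 < m c) {Δ : ℝ} {K : Set B} (hKS : K ⊆ realCone S)
    (hK : ∀ u ∈ K, ∀ v ∈ K, HilbertDistLE S Δ u v) {ℓ : B × B → ℂ}
    (hℓ : ℓ ∈ dualComplexCone S) {x y x' y' : B} (hx : x ∈ K) (hy : y ∈ K) (hx' : x' ∈ K)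
    (hy' : y' ∈ K) :
    ‖ℓ (x, y)‖ * (m x' + m y') ≤ 3 * Real.exp Δ ^ 3 * (m x + m y) * ‖ℓ (x', y')‖ := by
  have hL : ∀ u ∈ realCone S, ∀ v ∈ realCone S,
      hℓ.1.realRestrict u + I * hℓ.1.realRestrict v ≠ 0 := fun u hu v hv => by
    rw [← hℓ.1.apply_eq]
    exact hℓ.2 _ (pair_mem_complexCone hu hv)
  rw [hℓ.1.apply_eq, hℓ.1.apply_eq]
  exact norm_add_I_mul_mul_le hsep hL hm (hKS hx') (hKS hy') (hK _ hx' _ hx) (hK _ hx' _ hy)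
    (hK _ hy' _ hx')

section Gauge

variable {S : Set (B →L[ℝ] ℝ)}

theorem deltaGauge_cSmul_le (z w : ℂ) (h g : B × B) :
    deltaGauge S (cSmul z h) (cSmul w g) ≤ deltaGauge S h g := by
  refine iSup₂_le fun ζ hζ => iSup₂_le fun ξ hξ => ?_
  obtain ⟨ℓ, hℓ, rfl⟩ := hζ
  obtain ⟨ℓ', hℓ', rfl⟩ := hξ
  rw [hℓ.1.2.1, hℓ.1.2.1, hℓ'.1.2.1, hℓ'.1.2.1, mul_div_mul_comm, mul_div_mul_comm,
    norm_mul, norm_mul]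
  by_cases hzw : z / w = 0
  · simp [hzw]
  · rw [mul_div_mul_left _ _ (norm_ne_zero_iff.mpr hzw)]
    exact le_iSup₂_of_le (ℓ h / ℓ g) ⟨ℓ, hℓ, rfl⟩
      (le_iSup₂_of_le (ℓ' h / ℓ' g) ⟨ℓ', hℓ', rfl⟩ le_rfl)

theorem deltaGauge_le {h g : B × B} (hh : h ∈ complexCone S) (hg : g ∈ complexCone S)
    {C Mh Mg : ℝ} (hMh : 0 < Mh) (hMg : 0 < Mg)
    (hC : ∀ ℓ ∈ dualComplexCone S,
      ‖ℓ h‖ * Mg ≤ C * Mh * ‖ℓ g‖ ∧ ‖ℓ g‖ * Mh ≤ C * Mg * ‖ℓ h‖) :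
    deltaGauge S h g ≤ ENNReal.ofReal (2 * Real.log C) := by
  refine iSup₂_le fun ζ hζ => iSup₂_le fun ξ hξ => ENNReal.ofReal_le_ofReal ?_
  obtain ⟨ℓ, hℓ, rfl⟩ := hζ
  obtain ⟨ℓ', hℓ', rfl⟩ := hξ
  have hpos : ∀ ℓ ∈ dualComplexCone S, 0 < ‖ℓ h‖ ∧ 0 < ‖ℓ g‖ := fun ℓ hℓ =>
    ⟨norm_pos_iff.mpr (hℓ.2 h hh), norm_pos_iff.mpr (hℓ.2 g hg)⟩
  obtain ⟨hℓh, hℓg⟩ := hpos ℓ hℓ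
  obtain ⟨hℓ'h, hℓ'g⟩ := hpos ℓ' hℓ'
  have hratio : ‖ℓ h / ℓ g‖ / ‖ℓ' h / ℓ' g‖ ≤ C ^ 2 := by
    rw [norm_div, norm_div, div_div_div_eq, div_le_iff₀ (by positivity)]
    refine le_of_mul_le_mul_right ?_ (mul_pos hMg hMh)
    calc ‖ℓ h‖ * ‖ℓ' g‖ * (Mg * Mh) = (‖ℓ h‖ * Mg) * (‖ℓ' g‖ * Mh) := by ring
      _ ≤ (C * Mh * ‖ℓ g‖) * (C * Mg * ‖ℓ' h‖) :=
        mul_le_mul (hC ℓ hℓ).1 (hC ℓ' hℓ').2 (by positivity)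
          ((mul_pos hℓh hMg).le.trans (hC ℓ hℓ).1)
      _ = C ^ 2 * (‖ℓ g‖ * ‖ℓ' h‖) * (Mg * Mh) := by ring
  have hratio₀ : 0 < ‖ℓ h / ℓ g‖ / ‖ℓ' h / ℓ' g‖ := by
    rw [norm_div, norm_div]; positivity
  exact (Real.log_le_log hratio₀ hratio).trans_eq (by rw [Real.log_pow]; norm_num)

theorem deltaGauge_le_of_forall_hilbertDistLE (hsep : ∀ x : B, (∀ f ∈ S, f x = 0) → x = 0)
    {m : B →L[ℝ] ℝ} (hm : ∀ c ∈ realCone S, 0 < m c) {Δ : ℝ} {K : Set B}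
    (hKS : K ⊆ realCone S) (hK : ∀ u ∈ K, ∀ v ∈ K, HilbertDistLE S Δ u v) {x y x' y' : B}
    (hx : x ∈ K) (hy : y ∈ K) (hx' : x' ∈ K) (hy' : y' ∈ K) :
    deltaGauge S (x, y) (x', y') ≤ ENNReal.ofReal (2 * Real.log (3 * Real.exp Δ ^ 3)) :=
  deltaGauge_le (pair_mem_complexCone (hKS hx) (hKS hy))
    (pair_mem_complexCone (hKS hx') (hKS hy')) (add_pos (hm _ (hKS hx)) (hm _ (hKS hy)))
    (add_pos (hm _ (hKS hx')) (hm _ (hKS hy'))) fun _ hℓ =>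
      ⟨norm_apply_mul_le_of_mem_dualComplexCone hsep hm hKS hK hℓ hx hy hx' hy',
        norm_apply_mul_le_of_mem_dualComplexCone hsep hm hKS hK hℓ hx' hy' hx hy⟩

end Gauge

theorem two_mul_log_three_mul_exp_le {Δ κ : ℝ} (hΔ : 0 ≤ Δ) (hκ : 0 < κ) (hκ₁ : κ < 1) :
    2 * Real.log (3 * Real.exp Δ ^ 3) ≤ 8 * Δ + 2 * Real.log (3 * Real.sqrt 2 / κ ^ 2) := by
  have h3 : (3 : ℝ) ≤ 3 * Real.sqrt 2 / κ ^ 2 := by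
    rw [le_div_iff₀ (by positivity)]
    nlinarith [Real.one_lt_sqrt_two, pow_lt_one₀ hκ.le hκ₁ two_ne_zero]
  rw [Real.log_mul (by norm_num) (by positivity), ← Real.exp_nat_mul, Real.log_exp]
  nlinarith [Real.log_le_log (by norm_num) h3]

theorem real_diameter_controls_complex_diameter_general {B₁ B₂ : Type*}
    [NormedAddCommGroup B₁] [NormedSpace ℝ B₁]
    [NormedAddCommGroup B₂] [NormedSpace ℝ B₂]
    (st₁ : Setup B₁) (st₂ : Setup B₂)
    (A : B₁ →L[ℝ] B₂)
    (hAcone : ∀ h ∈ realCone st₁.S, A h ∈ realCone st₂.S)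
    (Δr : ℝ)
    -- the image of the real cone has `d_H`-diameter at most `Δ_ℝ`
    (hdiam : ∀ h ∈ realCone st₁.S, ∀ g ∈ realCone st₁.S, ∃ α β : ℝ,
      0 < α ∧ α ≤ β ∧ β ≤ α * Real.exp Δr ∧
      (A g - α • A h ∈ realCone st₂.S ∨ A g - α • A h = 0) ∧
      (β • A h - A g ∈ realCone st₂.S ∨ β • A h - A g = 0)) :
    (∀ p ∈ complexCone st₁.S, (A p.1, A p.2) ∈ complexCone st₂.S) ∧
    (∀ p ∈ complexCone st₁.S, ∀ q ∈ complexCone st₁.S,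
      deltaGauge st₂.S (A p.1, A p.2) (A q.1, A q.2) ≤
        ENNReal.ofReal (8 * Δr + 2 * Real.log (3 * Real.sqrt 2 / st₂.κ ^ 2))) := by
  have hA : ∀ (z : ℂ) (x y : B₁),
      ((A (cSmul z (x, y)).1, A (cSmul z (x, y)).2) : B₂ × B₂) = cSmul z (A x, A y) := by
    intro z x y
    simp [cSmul]
  refine ⟨?_, ?_⟩
  · rintro _ ⟨z, hz, x, hx, y, hy, rfl⟩
    exact ⟨z, hz, A x, hAcone x hx, A y, hAcone y hy, hA z x y⟩
  rintro _ ⟨z, -, x, hx, y, hy, rfl⟩ _ ⟨w, -, x', hx', y', hy', rfl⟩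
  have hK : ∀ u ∈ A '' realCone st₁.S, ∀ v ∈ A '' realCone st₁.S,
      HilbertDistLE st₂.S Δr u v := by
    rintro _ ⟨h, hh, rfl⟩ _ ⟨g, hg, rfl⟩
    exact hdiam h hh g hg
  rw [hA, hA]
  calc _ ≤ deltaGauge st₂.S (A x, A y) (A x', A y') := deltaGauge_cSmul_le z w _ _
    _ ≤ ENNReal.ofReal (2 * Real.log (3 * Real.exp Δr ^ 3)) :=
      deltaGauge_le_of_forall_hilbertDistLE st₂.separating st₂.mm_pos
        (image_subset_iff.mpr hAcone) hK (mem_image_of_mem A hx) (mem_image_of_mem A hy)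
        (mem_image_of_mem A hx') (mem_image_of_mem A hy')
    _ ≤ _ := ENNReal.ofReal_le_ofReal <| two_mul_log_three_mul_exp_le
      (hK _ (mem_image_of_mem A hx) _ (mem_image_of_mem A hx)).nonneg st₂.κ_pos st₂.κ_lt_one

/-- **Lemma 5.17 (real diameter controls the complex diameter).** If a bounded linear
operator `A` maps `𝒞_{1,ℝ}` into `𝒞_{2,ℝ}` with `d_H`-diameter of the image at most
`Δ_ℝ < ∞`, then its complexification maps `𝒞_{1,ℂ}` into `𝒞_{2,ℂ}` and the
`δ_{𝒞_{2,ℂ}}`-diameter of the image is at most `8Δ_ℝ + 2 ln(3√2 κ⁻²)`. -/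
theorem real_diameter_controls_complex_diameter {B₁ B₂ : Type*}
    [NormedAddCommGroup B₁] [NormedSpace ℝ B₁] [CompleteSpace B₁]
    [NormedAddCommGroup B₂] [NormedSpace ℝ B₂] [CompleteSpace B₂]
    (st₁ : Setup B₁) (st₂ : Setup B₂)
    (A : B₁ →L[ℝ] B₂)
    (hAcone : ∀ h ∈ realCone st₁.S, A h ∈ realCone st₂.S)
    (Δr : ℝ)
    -- the image of the real cone has `d_H`-diameter at most `Δ_ℝ`
    (hdiam : ∀ h ∈ realCone st₁.S, ∀ g ∈ realCone st₁.S, ∃ α β : ℝ,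
      0 < α ∧ α ≤ β ∧ β ≤ α * Real.exp Δr ∧
      (A g - α • A h ∈ realCone st₂.S ∨ A g - α • A h = 0) ∧
      (β • A h - A g ∈ realCone st₂.S ∨ β • A h - A g = 0)) :
    (∀ p ∈ complexCone st₁.S, (A p.1, A p.2) ∈ complexCone st₂.S) ∧
    (∀ p ∈ complexCone st₁.S, ∀ q ∈ complexCone st₁.S,
      deltaGauge st₂.S (A p.1, A p.2) (A q.1, A q.2) ≤
        ENNReal.ofReal (8 * Δr + 2 * Real.log (3 * Real.sqrt 2 / st₂.κ ^ 2))) :=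
  real_diameter_controls_complex_diameter_general st₁ st₂ A hAcone Δr hdiam

end ConeSetup
end

section
/- Let B_{1,ℝ}, B_{2,ℝ} be real Banach spaces with cones 𝒞_{1,ℝ}, 𝒞_{2,ℝ} from the real/complex cone setup, ℒ : B_{1,ℝ} → B_{2,ℝ} bounded linear with ℒ(𝒞_{1,ℝ}) ⊂ 𝒞_{2,ℝ}, and ℒ_ℂ : B_{1,ℂ} → B_{2,ℂ} a bounded complex-linear operator. For h ∈ 𝒞_{1,ℝ} write a(h) = Re(ℒ_ℂ h) and b(h) = Im(ℒ_ℂ h). If ε > 0 is such that for each h ∈ 𝒞_{1,ℝ} both εℒh ± 2[ℒh − a(h)] ∈ 𝒞_{2,ℝ} and εℒh ± 2b(h) ∈ 𝒞_{2,ℝ}, then for all ℓ ∈ S₂ (the functionals defining 𝒞_{2,ℝ}) and all h ∈ 𝒞_{1,ℝ}, |ℓ(ℒ_ℂ h) − ℓ(ℒ h)| ≤ ε ℓ(ℒ h). -/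
open Complex Set ENNReal

namespace ConeSetup

variable {B : Type*} [NormedAddCommGroup B] [NormedSpace ℝ B]

/-- A map between complexifications is a (continuous) complex-linear operator for the
complex structures `cSmul`. -/
def IsCLinearMap {B₁ B₂ : Type*} [NormedAddCommGroup B₁] [NormedSpace ℝ B₁]
    [NormedAddCommGroup B₂] [NormedSpace ℝ B₂]
    (L : B₁ × B₁ → B₂ × B₂) : Prop :=
  (∀ p q, L (p + q) = L p + L q) ∧
  (∀ (z : ℂ) (p), L (cSmul z p) = cSmul z (L p)) ∧
  Continuous L

/-- **Lemma 5.19 (sufficient condition for the perturbation bound).** Writing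
`a(h) = Re(ℒ_ℂ h)` and `b(h) = Im(ℒ_ℂ h)` for `h ∈ 𝒞_{1,ℝ}`, if
`εℒh ± 2[ℒh − a(h)] ∈ 𝒞_{2,ℝ}` and `εℒh ± 2b(h) ∈ 𝒞_{2,ℝ}` for every `h ∈ 𝒞_{1,ℝ}`,
then `|ℓ(ℒ_ℂ h) − ℓ(ℒ h)| ≤ ε ℓ(ℒ h)` for all `ℓ ∈ S₂` and `h ∈ 𝒞_{1,ℝ}`. -/
theorem perturbation_condition_check {B₁ B₂ : Type*}
    [NormedAddCommGroup B₁] [NormedSpace ℝ B₁] [CompleteSpace B₁]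
    [NormedAddCommGroup B₂] [NormedSpace ℝ B₂] [CompleteSpace B₂]
    (st₁ : Setup B₁) (st₂ : Setup B₂)
    (L : B₁ →L[ℝ] B₂)
    (hLcone : ∀ h ∈ realCone st₁.S, L h ∈ realCone st₂.S)
    (Lc : B₁ × B₁ → B₂ × B₂) (hLc : IsCLinearMap Lc)
    (ε : ℝ)
    (hre : ∀ h ∈ realCone st₁.S,
      ε • L h + (2 : ℝ) • (L h - (Lc (h, 0)).1) ∈ realCone st₂.S ∧
      ε • L h - (2 : ℝ) • (L h - (Lc (h, 0)).1) ∈ realCone st₂.S)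
    (him : ∀ h ∈ realCone st₁.S,
      ε • L h + (2 : ℝ) • (Lc (h, 0)).2 ∈ realCone st₂.S ∧
      ε • L h - (2 : ℝ) • (Lc (h, 0)).2 ∈ realCone st₂.S) :
    ∀ ℓ ∈ st₂.S, ∀ h ∈ realCone st₁.S,
      ‖cext ℓ (Lc (h, 0)) - (ℓ (L h) : ℂ)‖ ≤ ε * ℓ (L h) := by
  intro ℓ hℓ h hh
  have hx1 := (hre h hh).1.2 ℓ hℓ
  have hx2 := (hre h hh).2.2 ℓ hℓ
  have hy1 := (him h hh).1.2 ℓ hℓ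
  have hy2 := (him h hh).2.2 ℓ hℓ
  simp only [map_add, map_sub, map_smul, smul_eq_mul] at hx1 hx2 hy1 hy2
  set z : ℂ := cext ℓ (Lc (h, 0)) - (ℓ (L h) : ℂ) with hz
  have hzre : z.re = ℓ (Lc (h, 0)).1 - ℓ (L h) := by
    simp [hz, cext]
  have hzim : z.im = ℓ (Lc (h, 0)).2 := by
    simp [hz, cext]
  calc ‖z‖ ≤ |z.re| + |z.im| := Complex.norm_le_abs_re_add_abs_im z
    _ ≤ ε * ℓ (L h) / 2 + ε * ℓ (L h) / 2 := by
        gcongr <;> rw [abs_le] <;> constructor <;>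
          first
            | (rw [hzre]; linarith)
            | (rw [hzim]; linarith)
    _ = ε * ℓ (L h) := by ring


end ConeSetup
end
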